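/- Lock-step solution for C_CoT (the 'only-if' direction of Theorem 2 with a specific scheduler): Let P_1 = (T_1, F_1) on σ_1 and P_2 = (T_2, F_2) on σ_2 be programs and pre a predicate on σ_1 × σ_2. If P_1, P_2 satisfy co-termination with respect to pre, then C_CoT has a semantic solution in which sch_TT(d, b, x_1, x_2) ≡ True, sch_FT ≡ sch_TF ≡ False, and fnbnd ≡ 0; that is, there exist a predicate inv on ℤ × ℤ × σ_1 × σ_2 and a well-founded relation wfr on σ_2 such that clauses (1)–(6) of C_CoT hold with these choices of sch_TT, sch_FT, sch_TF, and fnbnd. -/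

import Mathlib

/-- `Reach T F v v'`: there is a finite execution of the program `(T, F)`
from `v` ending in the final state `v'`. -/
def Reach {σ : Type*} (T : σ → σ → Prop) (F : σ → Prop) (v v' : σ) : Prop :=
  ∃ (n : ℕ) (u : ℕ → σ), u 0 = v ∧ (∀ j < n, T (u j) (u (j + 1))) ∧ u n = v' ∧ F v'

/-- `Diverge T F v`: there is an infinite non-final execution of `(T, F)` from `v`. -/
def Diverge {σ : Type*} (T : σ → σ → Prop) (F : σ → Prop) (v : σ) : Prop :=
  ∃ u : ℕ → σ, u 0 = v ∧ (∀ j, T (u j) (u (j + 1))) ∧ (∀ j, ¬ F (u j))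

/-- A relation is well-founded in the paper's sense: no infinite chain. -/
def NoInfChain {τ : Type*} (W : τ → τ → Prop) : Prop :=
  ¬ ∃ v : ℕ → τ, ∀ j, W (v j) (v (j + 1))

/-- The lock-step scheduler for C_CoT: `sch_TT` is identically `True`. -/
def CoSchTT {σ₁ σ₂ : Type*} (_d _b : ℤ) (_x₁ : σ₁) (_x₂ : σ₂) : Prop := True

/-- The lock-step scheduler for C_CoT: `sch_FT` is identically `False`. -/
def CoSchFT {σ₁ σ₂ : Type*} (_d _b : ℤ) (_x₁ : σ₁) (_x₂ : σ₂) : Prop := False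

/-- The lock-step scheduler for C_CoT: `sch_TF` is identically `False`. -/
def CoSchTF {σ₁ σ₂ : Type*} (_d _b : ℤ) (_x₁ : σ₁) (_x₂ : σ₂) : Prop := False

/-!
Take `inv` to be lock-step reachability from `pre` (with `d = b = 0`) and `wfr` the steps of `P₂`
out of non-final states that are lock-step reachable together with a final state of `P₁`. An
infinite `wfr`-chain is a divergent run of `P₂`. Projecting the lock-step path back to its origin
in `pre` gives a terminating run of `P₁` and, since a final state of `P₂` only steps to itself, a
divergent run of `P₂` from the origin, contradicting co-termination.
-/

open Relation

section Runs

variable {σ : Type*} {T : σ → σ → Prop} {F : σ → Prop}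

theorem Reach.head {a b c : σ} (hab : T a b) (hbc : Reach T F b c) : Reach T F a c := by
  obtain ⟨n, u, hu0, hstep, hun, hc⟩ := hbc
  refine ⟨n + 1, fun j => Nat.casesOn j a u, rfl, ?_, hun, hc⟩
  rintro (_ | j) hj
  · simpa [hu0] using hab
  · exact hstep j (by omega)

theorem Reach.of_reflTransGen {v v' : σ} (h : ReflTransGen T v v') (hv' : F v') :
    Reach T F v v' := by
  induction h using ReflTransGen.head_induction_on with
  | refl => exact ⟨0, fun _ => v', rfl, by omega, rfl, hv'⟩
  | head hab _ ih => exact ih.head hab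

theorem Diverge.head (hFix : ∀ v v', F v → T v v' → v' = v) {a b : σ} (hab : T a b)
    (hb : Diverge T F b) : Diverge T F a := by
  obtain ⟨u, hu0, hstep, hnF⟩ := hb
  have ha : ¬ F a := fun ha => hnF 0 (hu0 ▸ hFix a b ha hab ▸ ha)
  refine ⟨fun j => Nat.casesOn j a u, rfl, ?_, ?_⟩
  · rintro (_ | j)
    · simpa [hu0] using hab
    · exact hstep j
  · rintro (_ | j)
    · exact ha
    · exact hnF j

theorem Diverge.of_reflTransGen (hFix : ∀ v v', F v → T v v' → v' = v) {v v' : σ}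
    (h : ReflTransGen T v v') (hv' : Diverge T F v') : Diverge T F v := by
  induction h using ReflTransGen.head_induction_on with
  | refl => exact hv'
  | head hab _ ih => exact ih.head hFix hab

end Runs

namespace Lockstep

variable {σ₁ σ₂ : Type*} (T₁ : σ₁ → σ₁ → Prop) (T₂ : σ₂ → σ₂ → Prop)

def step (p q : σ₁ × σ₂) : Prop := T₁ p.1 q.1 ∧ T₂ p.2 q.2

def Reachable (pre : σ₁ → σ₂ → Prop) (x₁ : σ₁) (x₂ : σ₂) : Prop :=
  ∃ a₁ a₂, pre a₁ a₂ ∧ ReflTransGen (step T₁ T₂) (a₁, a₂) (x₁, x₂)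

def residualStep (F₁ : σ₁ → Prop) (F₂ : σ₂ → Prop) (pre : σ₁ → σ₂ → Prop) (x₂ x₂' : σ₂) :
    Prop :=
  ∃ x₁, Reachable T₁ T₂ pre x₁ x₂ ∧ F₁ x₁ ∧ ¬ F₂ x₂ ∧ T₂ x₂ x₂'

variable {T₁ T₂} {pre : σ₁ → σ₂ → Prop}

theorem Reachable.of_pre {x₁ : σ₁} {x₂ : σ₂} (h : pre x₁ x₂) : Reachable T₁ T₂ pre x₁ x₂ :=
  ⟨x₁, x₂, h, .refl⟩

theorem Reachable.step {x₁ x₁' : σ₁} {x₂ x₂' : σ₂} (h : Reachable T₁ T₂ pre x₁ x₂)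
    (h₁ : T₁ x₁ x₁') (h₂ : T₂ x₂ x₂') : Reachable T₁ T₂ pre x₁' x₂' :=
  let ⟨a₁, a₂, hpre, hpath⟩ := h
  ⟨a₁, a₂, hpre, hpath.tail ⟨h₁, h₂⟩⟩

theorem reflTransGen_fst {p q : σ₁ × σ₂} (h : ReflTransGen (step T₁ T₂) p q) :
    ReflTransGen T₁ p.1 q.1 :=
  h.lift Prod.fst fun _ _ hpq => hpq.1

theorem reflTransGen_snd {p q : σ₁ × σ₂} (h : ReflTransGen (step T₁ T₂) p q) :
    ReflTransGen T₂ p.2 q.2 :=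
  h.lift Prod.snd fun _ _ hpq => hpq.2

theorem noInfChain_residualStep {F₁ : σ₁ → Prop} {F₂ : σ₂ → Prop}
    (hFix₂ : ∀ v v', F₂ v → T₂ v v' → v' = v)
    (hcoterm : ∀ v₁ v₂ v₁', pre v₁ v₂ → Reach T₁ F₁ v₁ v₁' → ¬ Diverge T₂ F₂ v₂) :
    NoInfChain (residualStep T₁ T₂ F₁ F₂ pre) := by
  rintro ⟨v, hv⟩
  have hrun : ∀ j, ¬ F₂ (v j) ∧ T₂ (v j) (v (j + 1)) := fun j =>
    let ⟨_, _, _, hj⟩ := hv j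
    hj
  have hdiv : Diverge T₂ F₂ (v 0) := ⟨v, rfl, fun j => (hrun j).2, fun j => (hrun j).1⟩
  obtain ⟨x₁, ⟨a₁, a₂, hpre, hpath⟩, hF₁, -⟩ := hv 0
  exact hcoterm a₁ a₂ x₁ hpre (.of_reflTransGen (reflTransGen_fst hpath) hF₁)
    (.of_reflTransGen hFix₂ (reflTransGen_snd hpath) hdiv)

end Lockstep

theorem coterm_lockstep_solution_general
    {σ₁ σ₂ : Type*}
    (T₁ : σ₁ → σ₁ → Prop) (F₁ : σ₁ → Prop)
    (T₂ : σ₂ → σ₂ → Prop) (F₂ : σ₂ → Prop)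
    (hFinFix₂ : ∀ v v', F₂ v → T₂ v v' → v' = v)
    (pre : σ₁ → σ₂ → Prop)
    (hcoterm : ∀ v₁ v₂ v₁', pre v₁ v₂ → Reach T₁ F₁ v₁ v₁' → ¬ Diverge T₂ F₂ v₂) :
    ∃ (inv : ℤ → ℤ → σ₁ → σ₂ → Prop) (wfr : σ₂ → σ₂ → Prop),
      NoInfChain wfr ∧
      -- (1), with fnbnd ≡ 0
      (∀ x₁ x₂, pre x₁ x₂ → inv 0 0 x₁ x₂) ∧
      -- (2)
      (∀ d b x₁ x₂, inv d b x₁ x₂ → ¬ F₁ x₁ → ¬ F₂ x₂ →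
        (-b ≤ d ∧ d ≤ b ∧ b ≥ 0)) ∧
      -- (3a)
      (∀ d d' b x₁ x₂ x₂', inv d b x₁ x₂ → CoSchFT d b x₁ x₂ → T₂ x₂ x₂' →
        (F₁ x₁ ∨ F₂ x₂ ∨ d' = d - 1) → inv d' b x₁ x₂') ∧
      -- (3b)
      (∀ d d' b x₁ x₁' x₂, inv d b x₁ x₂ → CoSchTF d b x₁ x₂ → T₁ x₁ x₁' →
        (F₁ x₁ ∨ F₂ x₂ ∨ d' = d + 1) → inv d' b x₁' x₂) ∧
      -- (3c)
      (∀ d b x₁ x₁' x₂ x₂', inv d b x₁ x₂ → CoSchTT d b x₁ x₂ → T₁ x₁ x₁' →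
        T₂ x₂ x₂' → inv d b x₁' x₂') ∧
      -- (4a)
      (∀ d b x₁ x₂, inv d b x₁ x₂ → CoSchFT d b x₁ x₂ → ¬ F₁ x₁ → ¬ F₂ x₂) ∧
      -- (4b)
      (∀ d b x₁ x₂, inv d b x₁ x₂ → CoSchTF d b x₁ x₂ → ¬ F₂ x₂ → ¬ F₁ x₁) ∧
      -- (5)
      (∀ d b x₁ x₂, inv d b x₁ x₂ → (¬ F₁ x₁ ∨ ¬ F₂ x₂) →
        CoSchTT d b x₁ x₂ ∨ CoSchFT d b x₁ x₂ ∨ CoSchTF d b x₁ x₂) ∧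
      -- (6)
      (∀ d b x₁ x₂ x₂', inv d b x₁ x₂ → F₁ x₁ → ¬ F₂ x₂ → T₂ x₂ x₂' →
        wfr x₂ x₂') := by
  refine ⟨fun d b x₁ x₂ => d = 0 ∧ b = 0 ∧ Lockstep.Reachable T₁ T₂ pre x₁ x₂,
    Lockstep.residualStep T₁ T₂ F₁ F₂ pre, Lockstep.noInfChain_residualStep hFinFix₂ hcoterm,
    ?_, ?_, nofun, nofun, ?_, nofun, nofun, fun _ _ _ _ _ _ => Or.inl trivial, ?_⟩
  · exact fun x₁ x₂ hpre => ⟨rfl, rfl, Lockstep.Reachable.of_pre hpre⟩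
  · rintro d b x₁ x₂ ⟨rfl, rfl, -⟩ - -
    simp
  · rintro d b x₁ x₁' x₂ x₂' ⟨hd, hb, hreach⟩ - h₁ h₂
    exact ⟨hd, hb, hreach.step h₁ h₂⟩
  · rintro d b x₁ x₂ x₂' ⟨-, -, hreach⟩ hF₁ hF₂ h₂
    exact ⟨x₁, hreach, hF₁, hF₂, h₂⟩

/-- Lock-step solution for C_CoT: the 'only-if' direction of Theorem 2,
with scheduler `sch_TT ≡ True`, `sch_FT ≡ sch_TF ≡ False` and `fnbnd ≡ 0`. -/
theorem coterm_lockstep_solution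
    {σ₁ σ₂ : Type*}
    (T₁ : σ₁ → σ₁ → Prop) (F₁ : σ₁ → Prop)
    (T₂ : σ₂ → σ₂ → Prop) (F₂ : σ₂ → Prop)
    (hFinFix₁ : ∀ v v', F₁ v → T₁ v v' → v' = v) (hFinLoop₁ : ∀ v, F₁ v → T₁ v v)
    (hFinFix₂ : ∀ v v', F₂ v → T₂ v v' → v' = v) (hFinLoop₂ : ∀ v, F₂ v → T₂ v v)
    (pre : σ₁ → σ₂ → Prop)
    (hcoterm : ∀ v₁ v₂ v₁', pre v₁ v₂ → Reach T₁ F₁ v₁ v₁' → ¬ Diverge T₂ F₂ v₂) :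
    ∃ (inv : ℤ → ℤ → σ₁ → σ₂ → Prop) (wfr : σ₂ → σ₂ → Prop),
      NoInfChain wfr ∧
      -- (1), with fnbnd ≡ 0
      (∀ x₁ x₂, pre x₁ x₂ → inv 0 0 x₁ x₂) ∧
      -- (2)
      (∀ d b x₁ x₂, inv d b x₁ x₂ → ¬ F₁ x₁ → ¬ F₂ x₂ →
        (-b ≤ d ∧ d ≤ b ∧ b ≥ 0)) ∧
      -- (3a)
      (∀ d d' b x₁ x₂ x₂', inv d b x₁ x₂ → CoSchFT d b x₁ x₂ → T₂ x₂ x₂' →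
        (F₁ x₁ ∨ F₂ x₂ ∨ d' = d - 1) → inv d' b x₁ x₂') ∧
      -- (3b)
      (∀ d d' b x₁ x₁' x₂, inv d b x₁ x₂ → CoSchTF d b x₁ x₂ → T₁ x₁ x₁' →
        (F₁ x₁ ∨ F₂ x₂ ∨ d' = d + 1) → inv d' b x₁' x₂) ∧
      -- (3c)
      (∀ d b x₁ x₁' x₂ x₂', inv d b x₁ x₂ → CoSchTT d b x₁ x₂ → T₁ x₁ x₁' →
        T₂ x₂ x₂' → inv d b x₁' x₂') ∧
      -- (4a)
      (∀ d b x₁ x₂, inv d b x₁ x₂ → CoSchFT d b x₁ x₂ → ¬ F₁ x₁ → ¬ F₂ x₂) ∧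
      -- (4b)
      (∀ d b x₁ x₂, inv d b x₁ x₂ → CoSchTF d b x₁ x₂ → ¬ F₂ x₂ → ¬ F₁ x₁) ∧
      -- (5)
      (∀ d b x₁ x₂, inv d b x₁ x₂ → (¬ F₁ x₁ ∨ ¬ F₂ x₂) →
        CoSchTT d b x₁ x₂ ∨ CoSchFT d b x₁ x₂ ∨ CoSchTF d b x₁ x₂) ∧
      -- (6)
      (∀ d b x₁ x₂ x₂', inv d b x₁ x₂ → F₁ x₁ → ¬ F₂ x₂ → T₂ x₂ x₂' →
        wfr x₂ x₂') :=
  coterm_lockstep_solution_general T₁ F₁ T₂ F₂ hFinFix₂ pre hcoterm
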